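/- arXiv:2603.26129 — 6 statements merged into one kernel-verified Lean document; each statement's English description precedes it below -/
import Mathlib

section
/- For every schedule of the n tasks on the m crowd workers, the total weighted completion time satisfies Σ_{j=1}^n w_j C_j ≥ (1/m)·Σ_{j=1}^n w_j Σ_{k=1}^{j} p_k + ((m-1)/(2m))·Σ_{j=1}^n w_j p_j + 2·φ_min·Σ_{j=1}^n w_j. In particular, the optimal total weighted completion time WCT_OPT is at least (1/m)·M_1 + ((m-1)/(2m))·M_n + 2·φ_min·Σ_{j=1}^n w_j, where M_1 = Σ_{j=1}^n w_j Σ_{k=1}^{j} p_k and M_n = Σ_{j=1}^n w_j p_j. -/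
/-!
Put `ρ j = w j / p j`, non-increasing by the Smith order, and `K j k = ρ (max j k) * p j * p k`.
Summed over all ordered pairs, `K` gives `2 ∑ⱼ wⱼ ∑_{k ≤ j} pₖ - ∑ⱼ wⱼ pⱼ`. Summed over the pairs
sharing a worker it gives at most `2 ∑ⱼ wⱼ (Cⱼ - 2 φ_{σ j}) - ∑ⱼ wⱼ pⱼ`, because
`K j k ≤ min (wⱼ pₖ) (wₖ pⱼ)` and of two tasks on one worker one is processed first.
Finally `ρ` is a non-negative combination of indicators of initial segments, so `K` is a
non-negative combination of rank-one kernels `f j * f k`, and for each of those Cauchy–Schwarz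
over the `m` fibres of `σ` bounds the sum over all pairs by `m` times the sum over same-worker
pairs. The contact times contribute at least `2 φ_min ∑ⱼ wⱼ`.
-/

open Finset Function

theorem sum_sum_add_sum_diag_eq_two_mul {ι β R : Type*} [Fintype ι] [DecidableEq ι]
    [LinearOrder β] [Semiring R] {π : ι → β} (hπ : Injective π) {a : ι → ι → R}
    (ha : ∀ j k, a j k = a k j) :
    ∑ j, ∑ k, a j k + ∑ j, a j j = 2 * ∑ j, ∑ k with π k ≤ π j, a j k := by
  have hflip : ∑ j, ∑ k with π k ≤ π j, a j k = ∑ j, ∑ k with π j ≤ π k, a j k := by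
    simp only [sum_filter]
    rw [sum_comm]
    exact sum_congr rfl fun j _ => sum_congr rfl fun k _ => by rw [ha]
  have hsplit : ∀ j k, (if π k ≤ π j then a j k else 0) + (if π j ≤ π k then a j k else 0)
      = a j k + if j = k then a j k else 0 := by
    intro j k
    rcases lt_trichotomy (π j) (π k) with h | h | h
    · simp [h.not_ge, h.le, hπ.ne_iff.1 h.ne]
    · simp [hπ h]
    · simp [h.not_ge, h.le, hπ.ne_iff.1 h.ne']
  rw [two_mul]
  nth_rewrite 2 [hflip]
  simp only [sum_filter, ← sum_add_distrib, hsplit]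
  simp [sum_add_distrib]

section Fibres

variable {ι κ τ : Type*} [Fintype ι] [Fintype κ] [Fintype τ] [DecidableEq κ]

theorem sum_sum_mul_le_card_mul_sum_sum_fiber (σ : ι → κ) (f : ι → ℝ) :
    ∑ j, ∑ k, f j * f k ≤ Fintype.card κ * ∑ j, ∑ k with σ k = σ j, f j * f k := by
  have hfibre : ∑ j, ∑ k with σ k = σ j, f j * f k = ∑ i, (∑ j with σ j = i, f j) ^ 2 := by
    rw [← sum_fiberwise univ σ]
    refine sum_congr rfl fun i _ => ?_
    rw [sq, sum_mul]
    refine sum_congr rfl fun j hj => ?_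
    rw [(mem_filter.1 hj).2, mul_sum]
  rw [hfibre, ← Fintype.sum_mul_sum, ← sq, ← sum_fiberwise univ σ f]
  exact sq_sum_le_card_mul_sum_sq

theorem sum_sum_sum_mul_le_card_mul_sum_sum_fiber (σ : ι → κ) {d : τ → ℝ} (hd : 0 ≤ d)
    (g : τ → ι → ℝ) :
    ∑ j, ∑ k, ∑ t, d t * (g t j * g t k)
      ≤ Fintype.card κ * ∑ j, ∑ k with σ k = σ j, ∑ t, d t * (g t j * g t k) := by
  have hswap : ∀ s : ι → Finset ι,
      ∑ j, ∑ k ∈ s j, ∑ t, d t * (g t j * g t k) = ∑ t, d t * ∑ j, ∑ k ∈ s j, g t j * g t k := by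
    intro s
    simp only [mul_sum]
    rw [sum_comm]
    exact sum_congr rfl fun _ _ => sum_comm
  rw [hswap (fun _ => univ), hswap, mul_sum]
  refine sum_le_sum fun t _ => ?_
  rw [mul_left_comm]
  exact mul_le_mul_of_nonneg_left (sum_sum_mul_le_card_mul_sum_sum_fiber σ (g t)) (hd t)

end Fibres

theorem Antitone.exists_nonneg_eq_sum_filter_le :
    ∀ {n : ℕ} {ρ : Fin n → ℝ}, Antitone ρ → 0 ≤ ρ →
      ∃ d : Fin n → ℝ, 0 ≤ d ∧ ∀ j, ρ j = ∑ t with j ≤ t, d t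
  | 0, _, _, _ => ⟨0, le_rfl, fun j => j.elim0⟩
  | n + 1, ρ, hρ, h0 => by
    obtain ⟨d, hd, hρd⟩ := Antitone.exists_nonneg_eq_sum_filter_le
      (ρ := fun i => ρ i.castSucc - ρ (Fin.last n))
      (fun i i' h => sub_le_sub_right (hρ (Fin.castSucc_le_castSucc_iff.2 h)) _)
      (fun i => sub_nonneg.2 (hρ (Fin.le_last _)))
    refine ⟨Fin.snoc d (ρ (Fin.last n)), fun t => ?_, fun j => ?_⟩
    · cases t using Fin.lastCases with
      | last => simpa using h0 _
      | cast i => simpa using hd i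
    · rw [sum_filter, Fin.sum_univ_castSucc]
      cases j using Fin.lastCases with
      | last => simp
      | cast i => simp [← sum_filter, ← hρd, Fin.le_last]

theorem sum_sum_antitone_max_mul_le {κ : Type*} [Fintype κ] [DecidableEq κ] {n : ℕ}
    (σ : Fin n → κ) {ρ : Fin n → ℝ} (hρ : Antitone ρ) (h0 : 0 ≤ ρ) (p : Fin n → ℝ) :
    ∑ j, ∑ k, ρ (max j k) * (p j * p k)
      ≤ Fintype.card κ * ∑ j, ∑ k with σ k = σ j, ρ (max j k) * (p j * p k) := by
  obtain ⟨d, hd, hρd⟩ := hρ.exists_nonneg_eq_sum_filter_le h0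
  have hlayers : ∀ j k, ρ (max j k) * (p j * p k)
      = ∑ t, d t * ((if j ≤ t then p j else 0) * (if k ≤ t then p k else 0)) := by
    intro j k
    rw [hρd, sum_filter, sum_mul]
    refine sum_congr rfl fun t _ => ?_
    simp only [max_le_iff]
    split_ifs <;> simp_all
  simp only [hlayers]
  exact sum_sum_sum_mul_le_card_mul_sum_sum_fiber σ hd _

section SmithKernel

variable {n : ℕ} (w p : Fin n → ℝ)

noncomputable def smithKernel (j k : Fin n) : ℝ := w (max j k) / p (max j k) * (p j * p k)

variable {w p}

theorem smithKernel_comm (j k : Fin n) : smithKernel w p j k = smithKernel w p k j := by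
  rw [smithKernel, smithKernel, max_comm, mul_comm (p j)]

theorem smithKernel_of_le (hp : ∀ j, p j ≠ 0) {j k : Fin n} (h : k ≤ j) :
    smithKernel w p j k = w j * p k := by
  rw [smithKernel, max_eq_left h]
  field_simp [hp j]

theorem smithKernel_le (hp : ∀ j, 0 < p j) (hsmith : Antitone fun j => w j / p j) (j k : Fin n) :
    smithKernel w p j k ≤ w j * p k :=
  calc smithKernel w p j k ≤ w j / p j * (p j * p k) :=
        mul_le_mul_of_nonneg_right (hsmith (le_max_left j k)) (mul_pos (hp j) (hp k)).le
    _ = w j * p k := by field_simp [(hp j).ne']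

theorem sum_sum_smithKernel_add_eq (hp : ∀ j, p j ≠ 0) :
    ∑ j, ∑ k, smithKernel w p j k + ∑ j, w j * p j = 2 * ∑ j, w j * ∑ k with k ≤ j, p k := by
  have h := sum_sum_add_sum_diag_eq_two_mul injective_id (smithKernel_comm (w := w) (p := p))
  simp only [id, smithKernel_of_le hp le_rfl] at h
  rw [h]
  congr 1
  refine sum_congr rfl fun j _ => ?_
  rw [mul_sum]
  exact sum_congr rfl fun k hk => smithKernel_of_le hp (mem_filter.1 hk).2

theorem sum_sum_fiber_smithKernel_add_le {κ : Type*} [DecidableEq κ] (hp : ∀ j, 0 < p j)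
    (hsmith : Antitone fun j => w j / p j) (σ : Fin n → κ) (π : Equiv.Perm (Fin n)) :
    ∑ j, ∑ k with σ k = σ j, smithKernel w p j k + ∑ j, w j * p j
      ≤ 2 * ∑ j, w j * ∑ k with σ k = σ j ∧ π k ≤ π j, p k := by
  set K : Fin n → Fin n → ℝ := fun j k => if σ k = σ j then smithKernel w p j k else 0
  have hK : ∀ j k, K j k = K k j := fun j k => by
    simp only [K, eq_comm (a := σ k), smithKernel_comm j k]
  calc ∑ j, ∑ k with σ k = σ j, smithKernel w p j k + ∑ j, w j * p j
      = 2 * ∑ j, ∑ k with π k ≤ π j, K j k := by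
        rw [← sum_sum_add_sum_diag_eq_two_mul π.injective hK]
        simp [K, sum_filter, smithKernel_of_le (fun j => (hp j).ne') le_rfl]
    _ ≤ 2 * ∑ j, w j * ∑ k with σ k = σ j ∧ π k ≤ π j, p k := by
        gcongr with j
        simp only [K, mul_sum, sum_filter]
        refine sum_le_sum fun k _ => ?_
        split_ifs <;> simp_all [smithKernel_le hp hsmith]

end SmithKernel

theorem two_mul_sum_prefix_add_le {n : ℕ} {w p : Fin n → ℝ} {κ : Type*} [Fintype κ]
    [DecidableEq κ] (hw : ∀ j, 0 ≤ w j) (hp : ∀ j, 0 < p j) (hsmith : Antitone fun j => w j / p j)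
    (σ : Fin n → κ) (π : Equiv.Perm (Fin n)) :
    2 * ∑ j, w j * ∑ k with k ≤ j, p k + (Fintype.card κ - 1) * ∑ j, w j * p j
      ≤ 2 * Fintype.card κ * ∑ j, w j * ∑ k with σ k = σ j ∧ π k ≤ π j, p k := by
  have hall := sum_sum_smithKernel_add_eq (w := w) (fun j => (hp j).ne')
  have hfibre := mul_le_mul_of_nonneg_left (sum_sum_fiber_smithKernel_add_le hp hsmith σ π)
    (Nat.cast_nonneg (Fintype.card κ))
  have hspread : ∑ j, ∑ k, smithKernel w p j k
      ≤ Fintype.card κ * ∑ j, ∑ k with σ k = σ j, smithKernel w p j k :=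
    sum_sum_antitone_max_mul_le σ hsmith (fun j => div_nonneg (hw j) (hp j).le) p
  linarith

theorem wct_lower_bound_general (n m : ℕ) (hm : 1 ≤ m)
    (w p : Fin n → ℝ) (φ : Fin m → ℝ)
    (hw : ∀ j, 0 ≤ w j) (hp : ∀ j, 0 < p j)
    (hsmith : ∀ j k : Fin n, j ≤ k → w k / p k ≤ w j / p j)
    (σ : Fin n → Fin m) (π : Equiv.Perm (Fin n)) :
    (1 / (m : ℝ)) * ∑ j, w j * ∑ k ∈ univ.filter (fun k => k ≤ j), p k
      + (((m : ℝ) - 1) / (2 * (m : ℝ))) * ∑ j, w j * p j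
      + 2 * (⨅ i, φ i) * ∑ j, w j
    ≤ ∑ j, w j *
        (2 * φ (σ j) + ∑ k ∈ univ.filter (fun k => σ k = σ j ∧ π k ≤ π j), p k) := by
  have hm₀ : (0 : ℝ) < m := by exact_mod_cast hm
  have hproc := two_mul_sum_prefix_add_le hw hp hsmith σ π
  rw [Fintype.card_fin] at hproc
  have hcontact : 2 * (⨅ i, φ i) * ∑ j, w j ≤ ∑ j, w j * (2 * φ (σ j)) := by
    rw [mul_sum]
    refine sum_le_sum fun j _ => ?_
    rw [mul_comm]
    exact mul_le_mul_of_nonneg_left (by gcongr; exact ciInf_le (Finite.bddBelow_range φ) _) (hw j)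
  have hdiv : (1 / (m : ℝ)) * ∑ j, w j * ∑ k with k ≤ j, p k
      + (((m : ℝ) - 1) / (2 * (m : ℝ))) * ∑ j, w j * p j
      ≤ ∑ j, w j * ∑ k with σ k = σ j ∧ π k ≤ π j, p k := by
    field_simp
    linarith
  simp only [mul_add, sum_add_distrib]
  linarith

/-- Lower bound on the total weighted completion time of any schedule of `n` tasks on
`m` identical crowd workers.  A schedule is given by an assignment `σ` of tasks to workers
together with a global priority permutation `π` (inducing the processing order of each
worker's tasks); the completion time of task `j` is
`C j = 2 * φ (σ j) + ∑_{k : σ k = σ j, π k ≤ π j} p k`.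
Tasks are indexed in non-increasing order of their Smith ratios `w j / p j`.  Then
`∑ j, w j * C j ≥ (1/m) * ∑ j, w j * ∑_{k ≤ j} p k + ((m-1)/(2m)) * ∑ j, w j * p j
  + 2 * φ_min * ∑ j, w j`. -/
theorem wct_lower_bound (n m : ℕ) (hm : 1 ≤ m)
    (w p : Fin n → ℝ) (φ : Fin m → ℝ)
    (hw : ∀ j, 0 ≤ w j) (hp : ∀ j, 0 < p j) (hφ : ∀ i, 0 < φ i)
    (hsmith : ∀ j k : Fin n, j ≤ k → w k / p k ≤ w j / p j)
    (σ : Fin n → Fin m) (π : Equiv.Perm (Fin n)) :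
    (1 / (m : ℝ)) * ∑ j, w j * ∑ k ∈ univ.filter (fun k => k ≤ j), p k
      + (((m : ℝ) - 1) / (2 * (m : ℝ))) * ∑ j, w j * p j
      + 2 * (⨅ i, φ i) * ∑ j, w j
    ≤ ∑ j, w j *
        (2 * φ (σ j) + ∑ k ∈ univ.filter (fun k => σ k = σ j ∧ π k ≤ π j), p k) :=
  wct_lower_bound_general n m hm w p φ hw hp hsmith σ π
end

section
/- In any LRF schedule, the completion time of each task j satisfies C_j ≤ 2·φ_max + (1/m)·Σ_{k=1}^{j-1} p_k + p_j. -/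
/-!
When task `j` is assigned, its worker has the least current workload `2 φ_i + L_i`, so that
workload is at most the average over all `m` workers. The average of the `2 φ_i` is at most
`2 φ_max`, and the loads `L_i` partition the service times of the tasks before `j`, so they
average to `(1/m) ∑_{k<j} p_k`. Finally task `j` itself adds `p j`.
-/

open Finset

theorem le_inv_card_mul_sum_of_forall_le {ι K : Type*} [Fintype ι] [Nonempty ι]
    [Field K] [LinearOrder K] [IsStrictOrderedRing K] {f : ι → K} {x : K} (h : ∀ i, x ≤ f i) :
    x ≤ (Fintype.card ι : K)⁻¹ * ∑ i, f i := by
  have hcard : (0 : K) < Fintype.card ι := by exact_mod_cast Fintype.card_pos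
  rw [← div_eq_inv_mul, le_div_iff₀ hcard, mul_comm]
  simpa using card_nsmul_le_sum univ f x fun i _ ↦ h i

theorem inv_card_mul_sum_le_ciSup {ι : Type*} [Fintype ι] [Nonempty ι] (f : ι → ℝ) :
    (Fintype.card ι : ℝ)⁻¹ * ∑ i, f i ≤ ⨆ i, f i := by
  have hcard : (0 : ℝ) < Fintype.card ι := by exact_mod_cast Fintype.card_pos
  rw [← div_eq_inv_mul, div_le_iff₀ hcard, mul_comm]
  simpa using sum_le_card_nsmul univ f _ fun i _ ↦ le_ciSup (Set.finite_range f).bddAbove i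

theorem sum_filter_le_and_eq_add_sum_filter_lt_and {α M : Type*} [Fintype α] [LinearOrder α]
    [AddCommMonoid M] {P : α → Prop} [DecidablePred P] (f : α → M) {j : α} (hj : P j) :
    ∑ k ∈ univ.filter (fun k ↦ k ≤ j ∧ P k), f k
      = f j + ∑ k ∈ univ.filter (fun k ↦ k < j ∧ P k), f k := by
  have hsplit : univ.filter (fun k ↦ k ≤ j ∧ P k)
      = insert j (univ.filter (fun k ↦ k < j ∧ P k)) := by
    ext k
    simp only [mem_filter, mem_univ, true_and, mem_insert, le_iff_lt_or_eq]
    constructor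
    · rintro ⟨hk | rfl, hPk⟩ <;> tauto
    · rintro (rfl | ⟨hk, hPk⟩) <;> tauto
  rw [hsplit, sum_insert (by simp)]

theorem sum_sum_filter_lt_and_eq_eq_sum_filter_lt {α ι M : Type*} [Fintype α] [LinearOrder α]
    [Fintype ι] [DecidableEq ι] [AddCommMonoid M] (σ : α → ι) (f : α → M) (j : α) :
    ∑ i, ∑ k ∈ univ.filter (fun k ↦ k < j ∧ σ k = i), f k
      = ∑ k ∈ univ.filter (fun k ↦ k < j), f k := by
  simp only [← filter_filter, sum_fiberwise]

theorem lrf_completion_time_upper_bound_general (n m : ℕ)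
    (p : Fin n → ℝ) (φ : Fin m → ℝ)
    (σ : Fin n → Fin m)
    (hLRF : ∀ j : Fin n, ∀ i : Fin m,
      2 * φ (σ j) + ∑ k ∈ univ.filter (fun k => k < j ∧ σ k = σ j), p k
        ≤ 2 * φ i + ∑ k ∈ univ.filter (fun k => k < j ∧ σ k = i), p k)
    (j : Fin n) :
    2 * φ (σ j) + ∑ k ∈ univ.filter (fun k => k ≤ j ∧ σ k = σ j), p k
      ≤ 2 * (⨆ i, φ i) + (1 / (m : ℝ)) * ∑ k ∈ univ.filter (fun k => k < j), p k + p j := by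
  have : Nonempty (Fin m) := ⟨σ j⟩
  have hφ : (m : ℝ)⁻¹ * ∑ i, φ i ≤ ⨆ i, φ i := by
    simpa using inv_card_mul_sum_le_ciSup φ
  calc 2 * φ (σ j) + ∑ k ∈ univ.filter (fun k => k ≤ j ∧ σ k = σ j), p k
      = (2 * φ (σ j) + ∑ k ∈ univ.filter (fun k => k < j ∧ σ k = σ j), p k) + p j := by
        rw [sum_filter_le_and_eq_add_sum_filter_lt_and p (rfl : σ j = σ j)]; ring
    _ ≤ (m : ℝ)⁻¹ * ∑ i, (2 * φ i + ∑ k ∈ univ.filter (fun k => k < j ∧ σ k = i), p k) + p j := by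
        gcongr
        simpa using le_inv_card_mul_sum_of_forall_le (hLRF j)
    _ ≤ 2 * (⨆ i, φ i) + (1 / (m : ℝ)) * ∑ k ∈ univ.filter (fun k => k < j), p k + p j := by
        rw [sum_add_distrib, sum_sum_filter_lt_and_eq_eq_sum_filter_lt, ← mul_sum, mul_add,
          one_div]
        linarith

/-- In any LRF schedule (tasks considered in index order, each task assigned to a worker of
currently minimum expected workload, each worker processing its tasks in assignment order),
the completion time of each task `j`, namely
`C j = 2 * φ (σ j) + ∑_{k ≤ j, σ k = σ j} p k`, satisfies
`C j ≤ 2 * φ_max + (1/m) * ∑_{k < j} p k + p j`. -/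
theorem lrf_completion_time_upper_bound (n m : ℕ) (hm : 1 ≤ m)
    (w p : Fin n → ℝ) (φ : Fin m → ℝ)
    (hw : ∀ j, 0 ≤ w j) (hp : ∀ j, 0 < p j) (hφ : ∀ i, 0 < φ i)
    (hsmith : ∀ j k : Fin n, j ≤ k → w k / p k ≤ w j / p j)
    (σ : Fin n → Fin m)
    (hLRF : ∀ j : Fin n, ∀ i : Fin m,
      2 * φ (σ j) + ∑ k ∈ univ.filter (fun k => k < j ∧ σ k = σ j), p k
        ≤ 2 * φ i + ∑ k ∈ univ.filter (fun k => k < j ∧ σ k = i), p k)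
    (j : Fin n) :
    2 * φ (σ j) + ∑ k ∈ univ.filter (fun k => k ≤ j ∧ σ k = σ j), p k
      ≤ 2 * (⨆ i, φ i) + (1 / (m : ℝ)) * ∑ k ∈ univ.filter (fun k => k < j), p k + p j :=
  lrf_completion_time_upper_bound_general n m p φ σ hLRF j
end

section
/- The total weighted completion time WCT_LRF of any LRF schedule satisfies WCT_LRF ≤ (1/m)·M_1 + ((m-1)/m)·M_n + 2·φ_max·Σ_{j=1}^n w_j, where M_1 = Σ_{j=1}^n w_j Σ_{k=1}^{j} p_k and M_n = Σ_{j=1}^n w_j p_j. -/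
/-!
When task `j` is assigned, LRF picks a worker of minimum workload, and a minimum is at most the
average over the `m` workers. That average is at most `2 φ_max + (1/m) ∑_{k<j} p k`, since the
tasks before `j` are shared among the workers. Adding `p j` bounds `C j` by
`2 φ_max + (1/m) ∑_{k ≤ j} p k + ((m-1)/m) p j`; weighting by `w j ≥ 0` and summing gives the
theorem.
-/

open Finset

namespace LRF

variable {ι κ : Type*} [Fintype ι] [DecidableEq ι]

def workload (φ : ι → ℝ) (σ : κ → ι) (p : κ → ℝ) (s : Finset κ) (i : ι) : ℝ :=
  2 * φ i + ∑ k ∈ s with σ k = i, p k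

theorem sum_workload (φ : ι → ℝ) (σ : κ → ι) (p : κ → ℝ) (s : Finset κ) :
    ∑ i, workload φ σ p s i = 2 * ∑ i, φ i + ∑ k ∈ s, p k := by
  simp only [workload, sum_add_distrib, mul_sum, sum_fiberwise]

theorem workload_le_of_minimal (φ : ι → ℝ) (σ : κ → ι) (p : κ → ℝ) (s : Finset κ) (i₀ : ι)
    (hmin : ∀ i, workload φ σ p s i₀ ≤ workload φ σ p s i) :
    workload φ σ p s i₀ ≤ 2 * (⨆ i, φ i) + (∑ k ∈ s, p k) / Fintype.card ι := by
  have hcard : (0 : ℝ) < Fintype.card ι := by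
    exact_mod_cast Fintype.card_pos_iff.mpr ⟨i₀⟩
  have hφ_le : ∀ i, φ i ≤ ⨆ i, φ i := le_ciSup (Set.finite_range φ).bddAbove
  have hφ_sum : ∑ i, φ i ≤ Fintype.card ι * ⨆ i, φ i := by
    simpa using sum_le_sum fun i (_ : i ∈ univ) => hφ_le i
  have hmin_le_avg : Fintype.card ι * workload φ σ p s i₀ ≤ ∑ i, workload φ σ p s i := by
    simpa using card_nsmul_le_sum univ _ _ fun i _ => hmin i
  rw [sum_workload] at hmin_le_avg
  rw [← sub_le_iff_le_add', le_div_iff₀' hcard]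
  linarith

variable {α : Type*} [Fintype α] [LinearOrder α]

theorem sum_filter_le_and_eq_add_sum_filter_lt_and {M : Type*} [AddCommMonoid M]
    (P : α → Prop) [DecidablePred P] (f : α → M) {j : α} (hj : P j) :
    ∑ k ∈ univ.filter (fun k => k ≤ j ∧ P k), f k
      = f j + ∑ k ∈ univ.filter (fun k => k < j ∧ P k), f k := by
  rw [← sum_insert (by simp)]
  congr 1
  ext k
  simp only [mem_filter, mem_univ, true_and, mem_insert, le_iff_lt_or_eq]
  grind

theorem completion_le_of_minimal_workload (φ : ι → ℝ) (σ : α → ι) (p : α → ℝ) (j : α)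
    (hmin : ∀ i, workload φ σ p {k | k < j} (σ j) ≤ workload φ σ p {k | k < j} i) :
    2 * φ (σ j) + ∑ k ∈ univ.filter (fun k => k ≤ j ∧ σ k = σ j), p k
      ≤ 2 * (⨆ i, φ i) + 1 / (Fintype.card ι : ℝ) * ∑ k ∈ univ.filter (fun k => k ≤ j), p k
        + ((Fintype.card ι : ℝ) - 1) / Fintype.card ι * p j := by
  have hcard : (Fintype.card ι : ℝ) ≠ 0 := by
    exact_mod_cast (Fintype.card_pos_iff.mpr ⟨σ j⟩).ne'
  have hbefore := workload_le_of_minimal φ σ p _ (σ j) hmin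
  simp only [workload, filter_filter] at hbefore
  have hprefix := sum_filter_le_and_eq_add_sum_filter_lt_and (fun _ => True) p (j := j) trivial
  simp only [and_true] at hprefix
  rw [sum_filter_le_and_eq_add_sum_filter_lt_and (σ · = σ j) p rfl, hprefix]
  have hshare : 1 / (Fintype.card ι : ℝ) * (p j + ∑ k ∈ univ.filter (fun k => k < j), p k)
      + ((Fintype.card ι : ℝ) - 1) / Fintype.card ι * p j
      = (∑ k ∈ univ.filter (fun k => k < j), p k) / Fintype.card ι + p j := by
    field_simp; ring
  linarith

end LRF

theorem lrf_wct_upper_bound_general (n m : ℕ)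
    (w p : Fin n → ℝ) (φ : Fin m → ℝ)
    (hw : ∀ j, 0 ≤ w j)
    (σ : Fin n → Fin m)
    (hLRF : ∀ j : Fin n, ∀ i : Fin m,
      2 * φ (σ j) + ∑ k ∈ univ.filter (fun k => k < j ∧ σ k = σ j), p k
        ≤ 2 * φ i + ∑ k ∈ univ.filter (fun k => k < j ∧ σ k = i), p k) :
    ∑ j, w j * (2 * φ (σ j) + ∑ k ∈ univ.filter (fun k => k ≤ j ∧ σ k = σ j), p k)
      ≤ (1 / (m : ℝ)) * ∑ j, w j * ∑ k ∈ univ.filter (fun k => k ≤ j), p k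
        + (((m : ℝ) - 1) / (m : ℝ)) * ∑ j, w j * p j
        + 2 * (⨆ i, φ i) * ∑ j, w j := by
  have hcompletion (j : Fin n) := LRF.completion_le_of_minimal_workload φ σ p j fun i => by
    simpa only [LRF.workload, filter_filter] using hLRF j i
  simp only [Fintype.card_fin] at hcompletion
  calc _ ≤ ∑ j, w j * (2 * (⨆ i, φ i) + 1 / (m : ℝ) * ∑ k ∈ univ.filter (fun k => k ≤ j), p k
          + ((m : ℝ) - 1) / m * p j) :=
        sum_le_sum fun j _ => mul_le_mul_of_nonneg_left (hcompletion j) (hw j)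
    _ = _ := by
      rw [mul_sum _ _ (1 / (m : ℝ)), mul_sum _ _ (((m : ℝ) - 1) / m), mul_sum _ _ (2 * ⨆ i, φ i),
        ← sum_add_distrib, ← sum_add_distrib]
      exact sum_congr rfl fun j _ => by ring

/-- Upper bound on the total weighted completion time of any LRF schedule:
`WCT_LRF ≤ (1/m) * M₁ + ((m-1)/m) * Mₙ + 2 * φ_max * ∑ j, w j`, where
`M₁ = ∑ j, w j * ∑_{k ≤ j} p k` and `Mₙ = ∑ j, w j * p j`.
An LRF schedule assigns tasks in index order, each to a worker of minimum current
expected workload, with each worker processing its tasks in assignment order, so that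
`C j = 2 * φ (σ j) + ∑_{k ≤ j, σ k = σ j} p k`. -/
theorem lrf_wct_upper_bound (n m : ℕ) (hm : 1 ≤ m)
    (w p : Fin n → ℝ) (φ : Fin m → ℝ)
    (hw : ∀ j, 0 ≤ w j) (hp : ∀ j, 0 < p j) (hφ : ∀ i, 0 < φ i)
    (hsmith : ∀ j k : Fin n, j ≤ k → w k / p k ≤ w j / p j)
    (σ : Fin n → Fin m)
    (hLRF : ∀ j : Fin n, ∀ i : Fin m,
      2 * φ (σ j) + ∑ k ∈ univ.filter (fun k => k < j ∧ σ k = σ j), p k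
        ≤ 2 * φ i + ∑ k ∈ univ.filter (fun k => k < j ∧ σ k = i), p k) :
    ∑ j, w j * (2 * φ (σ j) + ∑ k ∈ univ.filter (fun k => k ≤ j ∧ σ k = σ j), p k)
      ≤ (1 / (m : ℝ)) * ∑ j, w j * ∑ k ∈ univ.filter (fun k => k ≤ j), p k
        + (((m : ℝ) - 1) / (m : ℝ)) * ∑ j, w j * p j
        + 2 * (⨆ i, φ i) * ∑ j, w j :=
  lrf_wct_upper_bound_general n m w p φ hw σ hLRF
end

section
/- Assume m ≤ n. Let WCT_LRF be the total weighted completion time of an LRF schedule and let WCT_OPT be the minimum total weighted completion time over all schedules. Then WCT_LRF ≤ max(3/2, φ_max/φ_min)·WCT_OPT; equivalently, for every schedule Λ, WCT_LRF ≤ max(3/2, φ_max/φ_min)·Σ_{j=1}^n w_j C_j(Λ). -/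
/-!
Write `P j = ∑_{k ≤ j} p k` and let `D j` be the processing part of the completion time of `j`
in the competing schedule. Since LRF picks a worker of minimum expected workload, averaging
over the `m` workers gives `m (C_j - 2 φ_max) ≤ P j + (m - 1) p j` for the LRF schedule.
For every prefix `T` of the Smith order, `∑_T p_j (2 P_j - p_j) = (∑_T p_j)²`, while splitting
`T` by worker in the competing schedule and applying Cauchy–Schwarz to the `m` worker loads
gives `(∑_T p_j)² ≤ m ∑_T p_j (2 D_j - p_j)`. Abel summation against the non-increasing
Smith ratios `w_j / p_j` turns these prefix inequalities into the Eastman–Even–Isaacs bound,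
and combining it with the LRF estimate yields `WCT_LRF ≤ ∑ w_j (2 φ_max + 3/2 D_j)`; each term
is at most `max (3/2) (φ_max / φ_min)` times `w_j (2 φ_{σ' j} + D_j)`.
-/

open Finset

variable {ι ι' κ R : Type*}

theorem sum_mul_nonneg_of_antitoneOn [Ring R] [PartialOrder R] [IsOrderedRing R]
    [LinearOrder ι] {s : Finset ι} {ρ c : ι → R} (hρ : ∀ i ∈ s, 0 ≤ ρ i) (hρs : AntitoneOn ρ s)
    (hc : ∀ t ∈ s, 0 ≤ ∑ i ∈ s with i ≤ t, c i) :
    0 ≤ ∑ i ∈ s, ρ i * c i := by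
  classical
  induction s using Finset.induction_on_max generalizing ρ with
  | empty => simp
  | insert a s hmax ih =>
    have hsplit : ∑ i ∈ insert a s, ρ i * c i
        = ∑ i ∈ s, (ρ i - ρ a) * c i + ρ a * ∑ i ∈ insert a s, c i := by
      rw [sum_insert (fun h => (hmax a h).false), sum_insert (fun h => (hmax a h).false),
        mul_add, mul_sum]
      simp only [sub_mul, sum_sub_distrib]
      abel
    have hprefix : ∀ t ∈ s, ∑ i ∈ insert a s with i ≤ t, c i = ∑ i ∈ s with i ≤ t, c i :=
      fun t ht => by rw [filter_insert, if_neg (hmax t ht).not_ge]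
    have hall : ∑ i ∈ insert a s with i ≤ a, c i = ∑ i ∈ insert a s, c i := by
      rw [filter_true_of_mem fun i hi => ?_]
      rcases mem_insert.1 hi with rfl | hi
      exacts [le_rfl, (hmax i hi).le]
    rw [hsplit]
    refine add_nonneg (ih (fun i hi => ?_) (fun i hi j hj hij => ?_) (fun t ht => ?_)) ?_
    · exact sub_nonneg.2 (hρs (mem_insert_of_mem hi) (mem_insert_self a s) (hmax i hi).le)
    · exact sub_le_sub_right (hρs (mem_insert_of_mem hi) (mem_insert_of_mem hj) hij) _
    · rw [← hprefix t ht]; exact hc t (mem_insert_of_mem ht)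
    · rw [← hall]; exact mul_nonneg (hρ a (mem_insert_self a s)) (hc a (mem_insert_self a s))

theorem sum_mul_two_mul_sum_filter_le_sub [CommRing R] [LinearOrder ι'] (s : Finset ι)
    (p : ι → R) {g : ι → ι'} (hg : Function.Injective g) :
    ∑ j ∈ s, p j * (2 * ∑ k ∈ s with g k ≤ g j, p k - p j) = (∑ j ∈ s, p j) ^ 2 := by
  classical
  induction s using Finset.induction_on_max_value g with
  | empty => simp
  | insert a s has hmax ih =>
    have hlt : ∀ j ∈ s, g j < g a := fun j hj =>
      (hmax j hj).lt_of_ne (hg.ne fun h => has (h ▸ hj))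
    have hrest : ∀ j ∈ s, ∑ k ∈ insert a s with g k ≤ g j, p k = ∑ k ∈ s with g k ≤ g j, p k :=
      fun j hj => by rw [filter_insert, if_neg (hlt j hj).not_ge]
    have htop : ∑ k ∈ insert a s with g k ≤ g a, p k = p a + ∑ k ∈ s, p k := by
      rw [filter_true_of_mem fun k hk => ?_, sum_insert has]
      rcases mem_insert.1 hk with rfl | hk
      exacts [le_rfl, hmax k hk]
    have hs : ∑ j ∈ s, p j * (2 * ∑ k ∈ insert a s with g k ≤ g j, p k - p j) =
        (∑ j ∈ s, p j) ^ 2 := by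
      rw [← ih]; exact sum_congr rfl fun j hj => by rw [hrest j hj]
    rw [sum_insert has, htop, hs, sum_insert has]
    ring

theorem sq_sum_le_card_mul_sum_mul_sum_fiber [CommRing R] [LinearOrder R] [IsStrictOrderedRing R]
    [LinearOrder ι'] [Fintype κ] [DecidableEq κ] (s : Finset ι) (p : ι → R)
    (σ : ι → κ) {g : ι → ι'} (hg : Function.Injective g) :
    (∑ j ∈ s, p j) ^ 2 ≤
      Fintype.card κ * ∑ j ∈ s, p j * (2 * ∑ k ∈ s with σ k = σ j ∧ g k ≤ g j, p k - p j) := by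
  have hfiber : ∀ i, ∑ j ∈ s with σ j = i,
      p j * (2 * ∑ k ∈ s with σ k = σ j ∧ g k ≤ g j, p k - p j) =
        (∑ j ∈ s with σ j = i, p j) ^ 2 := by
    intro i
    rw [← sum_mul_two_mul_sum_filter_le_sub _ p hg]
    refine sum_congr rfl fun j hj => ?_
    rw [filter_filter, (mem_filter.1 hj).2]
  calc (∑ j ∈ s, p j) ^ 2 = (∑ i, ∑ j ∈ s with σ j = i, p j) ^ 2 := by rw [sum_fiberwise]
    _ ≤ Fintype.card κ * ∑ i, (∑ j ∈ s with σ j = i, p j) ^ 2 := by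
      simpa using sq_sum_le_card_mul_sum_sq (s := univ)
        (f := fun i => ∑ j ∈ s with σ j = i, p j)
    _ = _ := by simp_rw [← hfiber, sum_fiberwise]

theorem sum_filter_le_and_eq_add [AddCommMonoid R] [LinearOrder ι] [Fintype ι] (p : ι → R)
    {Q : ι → Prop} [DecidablePred Q] {j : ι} (hj : Q j) :
    ∑ k with k ≤ j ∧ Q k, p k = ∑ k with k < j ∧ Q k, p k + p j := by
  rw [add_comm, ← sum_insert (s := {k | k < j ∧ Q k}) (by simp)]
  congr 1
  ext k
  simp only [mem_filter, mem_univ, true_and, mem_insert, le_iff_lt_or_eq]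
  grind

/-- In the usual form, `∑ w_j D_j ≥ (1/m) ∑ w_j P_j + (m - 1)/(2m) ∑ w_j p_j`. -/
theorem eastman_even_isaacs [Field R] [LinearOrder R] [IsStrictOrderedRing R] [LinearOrder ι]
    [Fintype ι] [LinearOrder ι'] [Fintype κ] [DecidableEq κ] (w p : ι → R) (hw : ∀ j, 0 ≤ w j)
    (hp : ∀ j, 0 < p j) (hsmith : Antitone fun j => w j / p j) (σ : ι → κ) {g : ι → ι'}
    (hg : Function.Injective g) :
    ∑ j, w j * (2 * ∑ k with k ≤ j, p k - p j) ≤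
      Fintype.card κ * ∑ j, w j * (2 * ∑ k with σ k = σ j ∧ g k ≤ g j, p k - p j) := by
  set m : R := (Fintype.card κ : R)
  set P := fun j => ∑ k with k ≤ j, p k
  set D := fun j => ∑ k with σ k = σ j ∧ g k ≤ g j, p k
  have hprefix : ∀ t, 0 ≤ ∑ j with j ≤ t, p j * (m * (2 * D j - p j) - (2 * P j - p j)) := by
    intro t
    set T : Finset ι := {j | j ≤ t}
    have hP : ∑ j ∈ T, p j * (2 * P j - p j) = (∑ j ∈ T, p j) ^ 2 := by
      rw [← sum_mul_two_mul_sum_filter_le_sub T p Function.injective_id]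
      refine sum_congr rfl fun j hj => ?_
      have hTj : T.filter (fun k => id k ≤ id j) = univ.filter (· ≤ j) := by
        ext k
        simp only [T, mem_filter, mem_univ, true_and, id]
        exact ⟨And.right, fun hk => ⟨hk.trans (mem_filter.1 hj).2, hk⟩⟩
      rw [hTj]
    have hD : (∑ j ∈ T, p j) ^ 2 ≤ m * ∑ j ∈ T, p j * (2 * D j - p j) := by
      refine (sq_sum_le_card_mul_sum_mul_sum_fiber T p σ hg).trans ?_
      gcongr with j
      · exact (hp j).le
      · exact sum_le_sum_of_subset_of_nonneg (filter_subset_filter _ (subset_univ _))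
          fun k _ _ => (hp k).le
    have hsplit : ∑ j ∈ T, p j * (m * (2 * D j - p j) - (2 * P j - p j)) =
        m * ∑ j ∈ T, p j * (2 * D j - p j) - ∑ j ∈ T, p j * (2 * P j - p j) := by
      rw [mul_sum, ← sum_sub_distrib]
      exact sum_congr rfl fun _ _ => by ring
    linarith
  have habel := sum_mul_nonneg_of_antitoneOn (s := univ) (ρ := fun j => w j / p j)
    (fun j _ => div_nonneg (hw j) (hp j).le) (hsmith.antitoneOn _) (fun t _ => hprefix t)
  rw [mul_sum, ← sub_nonneg, ← sum_sub_distrib]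
  convert habel using 2 with j
  field_simp [(hp j).ne']
  ring

theorem card_mul_lrf_completion_le [CommRing R] [LinearOrder R] [IsOrderedRing R]
    [LinearOrder ι] [Fintype ι] [Fintype κ] [DecidableEq κ] (p : ι → R) (φ : κ → R)
    (σ : ι → κ) (j : ι)
    (hj : ∀ i, 2 * φ (σ j) + ∑ k with k < j ∧ σ k = σ j, p k ≤
      2 * φ i + ∑ k with k < j ∧ σ k = i, p k) :
    Fintype.card κ * (2 * φ (σ j) + ∑ k with k ≤ j ∧ σ k = σ j, p k) ≤
      2 * ∑ i, φ i + ∑ k with k ≤ j, p k + (Fintype.card κ - 1) * p j := by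
  have hmin := card_nsmul_le_sum univ _ _ fun i _ => hj i
  have hfiber : ∑ i, ∑ k with k < j ∧ σ k = i, p k = ∑ k with k < j, p k := by
    simp_rw [← filter_filter]
    exact sum_fiberwise _ _ _
  have hle : ∑ k with k ≤ j, p k = ∑ k with k < j, p k + p j := by
    simpa using sum_filter_le_and_eq_add p (j := j) (Q := fun _ => True) trivial
  rw [sum_add_distrib, hfiber, ← mul_sum, card_univ, nsmul_eq_mul] at hmin
  rw [sum_filter_le_and_eq_add p (Q := fun k => σ k = σ j) rfl, hle]
  linear_combination hmin

theorem lrf_wct_le [LinearOrder ι] [Fintype ι] [LinearOrder ι'] [Fintype κ] [DecidableEq κ]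
    [Nonempty κ] (w p : ι → ℝ) (hw : ∀ j, 0 ≤ w j) (hp : ∀ j, 0 < p j)
    (hsmith : Antitone fun j => w j / p j) (φ : κ → ℝ) {M : ℝ} (hM : ∀ i, φ i ≤ M)
    (σ : ι → κ)
    (hLRF : ∀ j i, 2 * φ (σ j) + ∑ k with k < j ∧ σ k = σ j, p k ≤
      2 * φ i + ∑ k with k < j ∧ σ k = i, p k)
    (σ' : ι → κ) {g : ι → ι'} (hg : Function.Injective g) :
    ∑ j, w j * (2 * φ (σ j) + ∑ k with k ≤ j ∧ σ k = σ j, p k) ≤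
      ∑ j, w j * (2 * M + 3 / 2 * ∑ k with σ' k = σ' j ∧ g k ≤ g j, p k) := by
  set m : ℝ := (Fintype.card κ : ℝ)
  have hm : 1 ≤ m := Nat.one_le_cast.2 Fintype.card_pos
  set P := fun j => ∑ k with k ≤ j, p k
  set D := fun j => ∑ k with σ' k = σ' j ∧ g k ≤ g j, p k
  have hφ : ∑ i, φ i ≤ m * M := by
    simpa using sum_le_sum fun i (_ : i ∈ univ) => hM i
  have hpD : ∀ j, p j ≤ D j := fun j =>
    single_le_sum (f := p) (fun k _ => (hp k).le) (by simp)
  have hEEI : ∑ j, w j * (2 * P j - p j) ≤ m * ∑ j, w j * (2 * D j - p j) :=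
    eastman_even_isaacs w p hw hp hsmith σ' hg
  -- the subtracted terms add up to the nonnegative slack of `hEEI`
  have hterm : ∀ j, m * (w j * (2 * φ (σ j) + ∑ k with k ≤ j ∧ σ k = σ j, p k)) ≤
      m * (w j * (2 * M + 3 / 2 * D j)) -
        (m * (w j * (2 * D j - p j)) - w j * (2 * P j - p j)) / 2 := by
    intro j
    have hC : m * (2 * φ (σ j) + ∑ k with k ≤ j ∧ σ k = σ j, p k) ≤
        2 * (m * M) + P j + (m - 1) * p j := by
      linarith [card_mul_lrf_completion_le p φ σ j (hLRF j)]
    have hrest : 0 ≤ w j * (m * (D j - p j) + p j) :=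
      mul_nonneg (hw j) (by nlinarith [hpD j, hp j])
    linarith [mul_le_mul_of_nonneg_left hC (hw j)]
  have hsum := sum_le_sum fun j (_ : j ∈ univ) => hterm j
  rw [sum_sub_distrib, ← sum_div, sum_sub_distrib, ← mul_sum, ← mul_sum, ← mul_sum] at hsum
  refine le_of_mul_le_mul_left ?_ (zero_lt_one.trans_le hm)
  linarith

theorem lrf_approximation_ratio_general (n m : ℕ) (hm : 1 ≤ m)
    (w p : Fin n → ℝ) (φ : Fin m → ℝ)
    (hw : ∀ j, 0 ≤ w j) (hp : ∀ j, 0 < p j) (hφ : ∀ i, 0 < φ i)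
    (hsmith : ∀ j k : Fin n, j ≤ k → w k / p k ≤ w j / p j)
    (σ : Fin n → Fin m)
    (hLRF : ∀ j : Fin n, ∀ i : Fin m,
      2 * φ (σ j) + ∑ k ∈ univ.filter (fun k => k < j ∧ σ k = σ j), p k
        ≤ 2 * φ i + ∑ k ∈ univ.filter (fun k => k < j ∧ σ k = i), p k)
    (σ' : Fin n → Fin m) (π' : Equiv.Perm (Fin n)) :
    ∑ j, w j * (2 * φ (σ j) + ∑ k ∈ univ.filter (fun k => k ≤ j ∧ σ k = σ j), p k)
      ≤ max (3 / 2) ((⨆ i, φ i) / (⨅ i, φ i)) *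
          ∑ j, w j *
            (2 * φ (σ' j) + ∑ k ∈ univ.filter (fun k => σ' k = σ' j ∧ π' k ≤ π' j), p k) := by
  have : Nonempty (Fin m) := ⟨⟨0, hm⟩⟩
  set φmax := ⨆ i, φ i
  set φmin := ⨅ i, φ i
  set ratio := max (3 / 2) (φmax / φmin)
  have hφmin_pos : 0 < φmin := by
    obtain ⟨i, hi⟩ := exists_eq_ciInf_of_finite (f := φ)
    exact (hφ i).trans_eq hi
  calc _ ≤ ∑ j, w j * (2 * φmax + 3 / 2 *
          ∑ k ∈ univ.filter (fun k => σ' k = σ' j ∧ π' k ≤ π' j), p k) :=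
        lrf_wct_le w p hw hp hsmith φ (le_ciSup (Finite.bddAbove_range φ)) σ hLRF σ'
          π'.injective
    _ ≤ _ := by
      rw [mul_sum]
      refine sum_le_sum fun j _ => ?_
      have hD : 0 ≤ ∑ k ∈ univ.filter (fun k => σ' k = σ' j ∧ π' k ≤ π' j), p k :=
        sum_nonneg fun k _ => (hp k).le
      have hφmax : φmax ≤ ratio * φ (σ' j) := calc
        φmax = φmax / φmin * φmin := (div_mul_cancel₀ _ hφmin_pos.ne').symm
        _ ≤ ratio * φ (σ' j) := mul_le_mul (le_max_right _ _)
          (ciInf_le (Finite.bddBelow_range φ) _) hφmin_pos.le (by positivity)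
      have h32 : (3 / 2 : ℝ) ≤ ratio := le_max_left _ _
      rw [mul_left_comm]
      refine mul_le_mul_of_nonneg_left ?_ (hw j)
      nlinarith

/-- Approximation ratio of the LRF algorithm: if `m ≤ n`, then for every schedule `Λ`
(given by an assignment `σ'` and a priority permutation `π'`), the total weighted
completion time of any LRF schedule `σ` satisfies
`WCT_LRF ≤ max (3/2) (φ_max / φ_min) * ∑ j, w j * C j (Λ)`.
In particular `WCT_LRF ≤ max (3/2) (φ_max / φ_min) * WCT_OPT`. -/
theorem lrf_approximation_ratio (n m : ℕ) (hm : 1 ≤ m) (hmn : m ≤ n)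
    (w p : Fin n → ℝ) (φ : Fin m → ℝ)
    (hw : ∀ j, 0 ≤ w j) (hp : ∀ j, 0 < p j) (hφ : ∀ i, 0 < φ i)
    (hsmith : ∀ j k : Fin n, j ≤ k → w k / p k ≤ w j / p j)
    (σ : Fin n → Fin m)
    (hLRF : ∀ j : Fin n, ∀ i : Fin m,
      2 * φ (σ j) + ∑ k ∈ univ.filter (fun k => k < j ∧ σ k = σ j), p k
        ≤ 2 * φ i + ∑ k ∈ univ.filter (fun k => k < j ∧ σ k = i), p k)
    (σ' : Fin n → Fin m) (π' : Equiv.Perm (Fin n)) :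
    ∑ j, w j * (2 * φ (σ j) + ∑ k ∈ univ.filter (fun k => k ≤ j ∧ σ k = σ j), p k)
      ≤ max (3 / 2) ((⨆ i, φ i) / (⨅ i, φ i)) *
          ∑ j, w j *
            (2 * φ (σ' j) + ∑ k ∈ univ.filter (fun k => σ' k = σ' j ∧ π' k ≤ π' j), p k) :=
  lrf_approximation_ratio_general n m hm w p φ hw hp hφ hsmith σ hLRF σ' π'
end

section
/- Let α > 0, Φ_max ≥ 0, Φ_min ≥ 0, and let w_1,…,w_n ≥ 0 (not all zero) and p_1,…,p_n ≥ p_min ≥ 0 with Φ_min + p_min > 0. Let W_C and W_O be real numbers with W_O ≥ Σ_{j=1}^n w_j·(Φ_min + p_j) and W_C ≤ α·(W_O + Φ_max·Σ_{j=1}^n w_j). Then W_C / W_O ≤ α·(1 + Φ_max·Σ_{j=1}^n w_j / Σ_{j=1}^n w_j·(Φ_min + p_j)) ≤ α·(1 + Φ_max/(Φ_min + p_min)). -/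
open Finset

lemma mul_sum_le_sum_mul_of_le {ι R : Type*} [CommSemiring R] [PartialOrder R] [IsOrderedRing R]
    (s : Finset ι) {w b : ι → R} {a : R} (hw : ∀ j ∈ s, 0 ≤ w j) (hb : ∀ j ∈ s, a ≤ b j) :
    a * ∑ j ∈ s, w j ≤ ∑ j ∈ s, w j * b j := by
  rw [mul_sum]
  exact sum_le_sum fun j hj => by
    rw [mul_comm]
    exact mul_le_mul_of_nonneg_left (hb j hj) (hw j hj)

lemma div_le_mul_one_add_div_of_le_mul_add {α K T WC WO : ℝ} (hT : 0 < T) (hTWO : T ≤ WO)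
    (hα : 0 ≤ α) (hK : 0 ≤ K) (hWC : WC ≤ α * (WO + K)) :
    WC / WO ≤ α * (1 + K / T) := by
  have hWO : 0 < WO := hT.trans_le hTWO
  calc WC / WO ≤ α * (WO + K) / WO := div_le_div_of_nonneg_right hWC hWO.le
    _ = α * (1 + K / WO) := by field_simp
    _ ≤ α * (1 + K / T) := by gcongr

lemma mul_div_le_div_of_mul_le {Φ c S T : ℝ} (hc : 0 < c) (hΦ : 0 ≤ Φ) (hT : 0 < T)
    (hST : c * S ≤ T) : Φ * S / T ≤ Φ / c := by
  rw [div_le_div_iff₀ hT hc]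
  calc Φ * S * c = Φ * (c * S) := by ring
    _ ≤ Φ * T := mul_le_mul_of_nonneg_left hST hΦ

theorem cosmos_competitive_ratio_general (n : ℕ) (α Φmax Φmin pmin WC WO : ℝ)
    (w p : Fin n → ℝ)
    (hα : 0 < α) (hΦmax : 0 ≤ Φmax)
    (hpos : 0 < Φmin + pmin)
    (hw : ∀ j, 0 ≤ w j) (hw0 : ∃ j, w j ≠ 0)
    (hp : ∀ j, pmin ≤ p j)
    (hWO : ∑ j, w j * (Φmin + p j) ≤ WO)
    (hWC : WC ≤ α * (WO + Φmax * ∑ j, w j)) :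
    (WC / WO ≤ α * (1 + Φmax * (∑ j, w j) / ∑ j, w j * (Φmin + p j)))
    ∧ α * (1 + Φmax * (∑ j, w j) / ∑ j, w j * (Φmin + p j))
        ≤ α * (1 + Φmax / (Φmin + pmin)) := by
  obtain ⟨j₀, hj₀⟩ := hw0
  have hS : 0 < ∑ j, w j := sum_pos' (fun j _ => hw j) ⟨j₀, mem_univ _, (hw j₀).lt_of_ne' hj₀⟩
  have hST : (Φmin + pmin) * ∑ j, w j ≤ ∑ j, w j * (Φmin + p j) :=
    mul_sum_le_sum_mul_of_le _ (fun j _ => hw j) fun j _ => by linarith [hp j]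
  have hT : 0 < ∑ j, w j * (Φmin + p j) := (mul_pos hpos hS).trans_le hST
  exact ⟨div_le_mul_one_add_div_of_le_mul_add hT hWO hα.le (mul_nonneg hΦmax hS.le) hWC,
    mul_le_mul_of_nonneg_left (add_le_add_right (mul_div_le_div_of_mul_le hpos hΦmax hT hST) 1)
      hα.le⟩

/-- Arithmetic core of the CosMOS competitive-ratio bound: if `α > 0`,
`Φmax, Φmin, pmin ≥ 0`, `Φmin + pmin > 0`, the weights `w j ≥ 0` are not all zero,
`p j ≥ pmin` for all `j`, `W_O ≥ ∑ j, w j * (Φmin + p j)` and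
`W_C ≤ α * (W_O + Φmax * ∑ j, w j)`, then
`W_C / W_O ≤ α * (1 + Φmax * ∑ j, w j / ∑ j, w j * (Φmin + p j))
  ≤ α * (1 + Φmax / (Φmin + pmin))`. -/
theorem cosmos_competitive_ratio (n : ℕ) (α Φmax Φmin pmin WC WO : ℝ)
    (w p : Fin n → ℝ)
    (hα : 0 < α) (hΦmax : 0 ≤ Φmax) (hΦmin : 0 ≤ Φmin) (hpmin : 0 ≤ pmin)
    (hpos : 0 < Φmin + pmin)
    (hw : ∀ j, 0 ≤ w j) (hw0 : ∃ j, w j ≠ 0)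
    (hp : ∀ j, pmin ≤ p j)
    (hWO : ∑ j, w j * (Φmin + p j) ≤ WO)
    (hWC : WC ≤ α * (WO + Φmax * ∑ j, w j)) :
    (WC / WO ≤ α * (1 + Φmax * (∑ j, w j) / ∑ j, w j * (Φmin + p j)))
    ∧ α * (1 + Φmax * (∑ j, w j) / ∑ j, w j * (Φmin + p j))
        ≤ α * (1 + Φmax / (Φmin + pmin)) :=
  cosmos_competitive_ratio_general n α Φmax Φmin pmin WC WO w p hα hΦmax hpos hw hw0 hp hWO hWC
end

section
/- Consider n tasks and m crowd workers, a matrix y with entries y_{ij} ∈ [0,1] satisfying Σ_{i=1}^m y_{ij} = 1 for every task j, total contact times Φ_1,…,Φ_m ≥ 0, processing times p_{ij} ≥ 0, and for each worker i a strict total order ≺_i on the tasks (the priority order). Let σ(1),…,σ(n) be independent random variables where σ(j) takes value i with probability y_{ij}, and define the completion time of task j as C_j = Φ_{σ(j)} + p_{σ(j) j} + Σ over tasks j' ≠ j with σ(j') = σ(j) and j' ≺_{σ(j)} j of p_{σ(j) j'}. Then for every task j and worker i with y_{ij} > 0, the conditional expectation of C_j given σ(j) = i equals Φ_i + p_{ij}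 + Σ over tasks j' ≠ j with j' ≺_i j of y_{ij'}·p_{ij'}. -/
/-!
Under the product weight `∏ k, y (σ k) k`, summing out a coordinate that an indicator does not
constrain contributes a factor `∑ a, y a k = 1`. Hence `𝔼[1{σ j = i}] = y i j` and, for `j' ≠ j`,
`𝔼[1{σ j = i ∧ σ j' = i}] = y i j * y i j'`: this is where the independence of the assignments
enters. Since `C j · 1{σ j = i}` is a linear combination of these indicators, its expectation is
`y i j` times the claimed value.
-/

open Finset

section ProductWeights

variable {ι α R : Type*} [Fintype ι] [DecidableEq ι] [Fintype α] [DecidableEq α]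
  [CommSemiring R] (w : ι → α → R)

theorem sum_prod_mul_prod_ite_eq (s : Finset ι) (τ : ι → α)
    (hw : ∀ k ∉ s, ∑ a, w k a = 1) :
    ∑ σ : ι → α, (∏ k, w k (σ k)) * ∏ k ∈ s, (if σ k = τ k then 1 else 0)
      = ∏ k ∈ s, w k (τ k) := by
  have marginal : ∀ k, ∑ a, w k a * (if k ∈ s then (if a = τ k then 1 else 0) else 1)
      = if k ∈ s then w k (τ k) else 1 := by
    intro k
    by_cases hk : k ∈ s
    · simp [hk]
    · simpa [hk] using hw k hk
  calc ∑ σ : ι → α, (∏ k, w k (σ k)) * ∏ k ∈ s, (if σ k = τ k then 1 else 0)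
      = ∑ σ : ι → α, ∏ k, w k (σ k) * (if k ∈ s then (if σ k = τ k then 1 else 0) else 1) := by
        simp_rw [prod_mul_distrib, prod_ite_mem, univ_inter]
    _ = ∏ k, ∑ a, w k a * (if k ∈ s then (if a = τ k then 1 else 0) else 1) :=
        (Fintype.prod_sum fun k a => w k a * if k ∈ s then (if a = τ k then 1 else 0) else 1).symm
    _ = ∏ k ∈ s, w k (τ k) := by simp_rw [marginal, prod_ite_mem, univ_inter]

theorem sum_prod_mul_ite_eq (hw : ∀ k, ∑ a, w k a = 1) (k : ι) (a : α) :
    ∑ σ : ι → α, (∏ l, w l (σ l)) * (if σ k = a then 1 else 0) = w k a := by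
  simpa using sum_prod_mul_prod_ite_eq w {k} (fun _ => a) (fun l _ => hw l)

theorem sum_prod_mul_ite_eq_mul_ite_eq (hw : ∀ k, ∑ a, w k a = 1) {k l : ι} (hkl : k ≠ l)
    (a : α) :
    ∑ σ : ι → α, (∏ r, w r (σ r)) * (if σ k = a ∧ σ l = a then 1 else 0) = w k a * w l a := by
  have h := sum_prod_mul_prod_ite_eq w {k, l} (fun _ => a) (fun r _ => hw r)
  simp_rw [prod_pair hkl, ite_zero_mul_ite_zero, one_mul] at h
  exact h

end ProductWeights

section CompletionTime

variable {ι α R : Type*} [Fintype ι] [DecidableEq ι] [DecidableEq α] [CommSemiring R]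

def completionTime (Φ : α → R) (p : α → ι → R) (prec : α → ι → ι → Prop)
    [∀ a, DecidableRel (prec a)] (σ : ι → α) (j : ι) : R :=
  Φ (σ j) + p (σ j) j + ∑ j' ∈ univ.filter (fun j' => j' ≠ j ∧ σ j' = σ j ∧ prec (σ j) j' j),
    p (σ j) j'

theorem ite_completionTime_eq (Φ : α → R) (p : α → ι → R) (prec : α → ι → ι → Prop)
    [∀ a, DecidableRel (prec a)] (σ : ι → α) (j : ι) (i : α) :
    (if σ j = i then completionTime Φ p prec σ j else 0)
      = (if σ j = i then 1 else 0) * (Φ i + p i j)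
        + ∑ j' ∈ univ.filter (fun j' => j' ≠ j ∧ prec i j' j),
            (if σ j = i ∧ σ j' = i then 1 else 0) * p i j' := by
  by_cases hj : σ j = i
  · simp only [completionTime, hj, if_true, one_mul, sum_filter]
    congr 1
    refine sum_congr rfl fun j' _ => ?_
    by_cases hj' : σ j' = i <;> simp [hj']
  · simp [hj]

theorem sum_prod_mul_ite_completionTime_eq [Fintype α] (w : ι → α → R)
    (hw : ∀ k, ∑ a, w k a = 1) (Φ : α → R) (p : α → ι → R) (prec : α → ι → ι → Prop)
    [∀ a, DecidableRel (prec a)] (j : ι) (i : α) :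
    ∑ σ : ι → α, (∏ k, w k (σ k)) * (if σ j = i then completionTime Φ p prec σ j else 0)
      = w j i * (Φ i + p i j +
          ∑ j' ∈ univ.filter (fun j' => j' ≠ j ∧ prec i j' j), w j' i * p i j') := by
  set T := univ.filter (fun j' => j' ≠ j ∧ prec i j' j)
  calc _ = (∑ σ : ι → α, (∏ k, w k (σ k)) * if σ j = i then 1 else 0) * (Φ i + p i j)
          + ∑ j' ∈ T, (∑ σ : ι → α,
              (∏ k, w k (σ k)) * if σ j = i ∧ σ j' = i then 1 else 0) * p i j' := by
        simp_rw [ite_completionTime_eq, mul_add, sum_add_distrib, sum_mul, mul_sum, mul_assoc]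
        exact congrArg _ sum_comm
    _ = w j i * (Φ i + p i j) + ∑ j' ∈ T, w j i * w j' i * p i j' := by
        rw [sum_prod_mul_ite_eq w hw]
        refine congrArg _ (sum_congr rfl fun j' hj' => ?_)
        rw [sum_prod_mul_ite_eq_mul_ite_eq w hw (mem_filter.mp hj').2.1.symm]
    _ = w j i * (Φ i + p i j + ∑ j' ∈ T, w j' i * p i j') := by
        simp only [mul_add, mul_sum, mul_assoc]

end CompletionTime

theorem independent_rounding_conditional_expected_completion_time_general
    (n m : ℕ) (y : Fin m → Fin n → ℝ) (Φ : Fin m → ℝ) (p : Fin m → Fin n → ℝ)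
    (prec : Fin m → Fin n → Fin n → Prop) [∀ i, DecidableRel (prec i)]
    (hysum : ∀ j, ∑ i, y i j = 1)
    (j : Fin n) (i : Fin m) (hyij : 0 < y i j) :
    (∑ σ : Fin n → Fin m, (∏ k, y (σ k) k) *
        (if σ j = i then
            Φ (σ j) + p (σ j) j +
              ∑ j' ∈ univ.filter (fun j' => j' ≠ j ∧ σ j' = σ j ∧ prec (σ j) j' j),
                p (σ j) j'
          else 0)) / y i j
      = Φ i + p i j +
          ∑ j' ∈ univ.filter (fun j' => j' ≠ j ∧ prec i j' j), y i j' * p i j' := by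
  set w : Fin n → Fin m → ℝ := fun k a => y a k
  change (∑ σ : Fin n → Fin m, (∏ k, w k (σ k)) *
    (if σ j = i then completionTime Φ p prec σ j else 0)) / w j i = _
  rw [sum_prod_mul_ite_completionTime_eq w hysum, mul_div_cancel_left₀ _ hyij.ne']

/-- Expected completion time under independent rounding.  Tasks `j : Fin n` are assigned
independently to workers `i : Fin m`, task `j` going to worker `i` with probability
`y i j` (so an assignment `σ : Fin n → Fin m` has probability `∏ k, y (σ k) k`).
Given priorities `prec i` (a strict total order on tasks for each worker `i`), the
completion time of task `j` under assignment `σ` is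
`C j σ = Φ (σ j) + p (σ j) j + ∑_{j' ≠ j, σ j' = σ j, j' ≺_{σ j} j} p (σ j) j'`.
Then for every task `j` and worker `i` with `y i j > 0`, the conditional expectation
`E[C j ∣ σ j = i] = E[C j · 1_{σ j = i}] / Pr[σ j = i]` equals
`Φ i + p i j + ∑_{j' ≠ j, j' ≺_i j} y i j' * p i j'`. -/
theorem independent_rounding_conditional_expected_completion_time
    (n m : ℕ) (y : Fin m → Fin n → ℝ) (Φ : Fin m → ℝ) (p : Fin m → Fin n → ℝ)
    (prec : Fin m → Fin n → Fin n → Prop) [∀ i, DecidableRel (prec i)]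
    (hprec : ∀ i, IsStrictTotalOrder (Fin n) (prec i))
    (hy0 : ∀ i j, 0 ≤ y i j) (hy1 : ∀ i j, y i j ≤ 1)
    (hysum : ∀ j, ∑ i, y i j = 1)
    (hΦ : ∀ i, 0 ≤ Φ i) (hp : ∀ i j, 0 ≤ p i j)
    (j : Fin n) (i : Fin m) (hyij : 0 < y i j) :
    (∑ σ : Fin n → Fin m, (∏ k, y (σ k) k) *
        (if σ j = i then
            Φ (σ j) + p (σ j) j +
              ∑ j' ∈ univ.filter (fun j' => j' ≠ j ∧ σ j' = σ j ∧ prec (σ j) j' j),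
                p (σ j) j'
          else 0)) / y i j
      = Φ i + p i j +
          ∑ j' ∈ univ.filter (fun j' => j' ≠ j ∧ prec i j' j), y i j' * p i j' :=
  independent_rounding_conditional_expected_completion_time_general n m y Φ p prec hysum j i hyij
end
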